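/- arXiv:1204.6555 — 2 statements merged into one kernel-verified Lean document; each statement's English description precedes it below -/
import Mathlib

section
/- (Robbins' theorem) A finite connected graph is bridgeless if and only if it admits a strongly connected orientation, i.e., an orientation of its edges such that for every ordered pair of vertices there is a directed path from the first to the second. -/
open scoped RealInnerProductSpace
open Classical

structure Digraph' (V E : Type) where
  s : E → V
  t : E → V

namespace Digraph'

variable {V E : Type} [Fintype V] [Fintype E] [DecidableEq V] [DecidableEq E]

/-- boundary map ∂ : C₁ → C₀, ∂e = source e − target e -/
noncomputable def bd (G : Digraph' V E) :
    EuclideanSpace ℝ E →ₗ[ℝ] EuclideanSpace ℝ V :=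
  Matrix.toEuclideanLin (Matrix.of fun v e =>
    (if G.s e = v then (1:ℝ) else 0) - (if G.t e = v then (1:ℝ) else 0))

/-- coboundary map δ : C₀ → C₁ -/
noncomputable def cobd (G : Digraph' V E) :
    EuclideanSpace ℝ V →ₗ[ℝ] EuclideanSpace ℝ E :=
  Matrix.toEuclideanLin (Matrix.of fun e v =>
    (if G.s e = v then (1:ℝ) else 0) - (if G.t e = v then (1:ℝ) else 0))

/-- orthogonal projection onto H₁(Γ,ℝ) = ker ∂, valued in the ambient space -/
noncomputable def proj (G : Digraph' V E) (x : EuclideanSpace ℝ E) : EuclideanSpace ℝ E :=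
  (Submodule.orthogonalProjection (LinearMap.ker (bd G)) x : EuclideanSpace ℝ E)

/-- reachability using only edges in S (edges traversable both ways) -/
def Reach (G : Digraph' V E) (S : Set E) : V → V → Prop :=
  Relation.ReflTransGen (fun a b => ∃ e ∈ S, (G.s e = a ∧ G.t e = b) ∨ (G.s e = b ∧ G.t e = a))

def Connected (G : Digraph' V E) : Prop := ∀ a b : V, Reach G Set.univ a b

/-- an edge is a bridge if its removal disconnects the graph -/
def IsBridge (G : Digraph' V E) (e : E) : Prop := ¬ ∀ a b : V, Reach G {e}ᶜ a b

def Bridgeless (G : Digraph' V E) : Prop := ∀ e : E, ¬ IsBridge G e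

/-- directed reachability -/
def DirReach (G : Digraph' V E) : V → V → Prop :=
  Relation.ReflTransGen (fun a b => ∃ e, G.s e = a ∧ G.t e = b)

def StronglyConnected (G : Digraph' V E) : Prop := ∀ a b : V, DirReach G a b

/-- a step of a walk: an edge with a direction of traversal (`true` = forward) -/
def stepSource (G : Digraph' V E) (st : E × Bool) : V := if st.2 then G.s st.1 else G.t st.1
def stepTarget (G : Digraph' V E) (st : E × Bool) : V := if st.2 then G.t st.1 else G.s st.1

/-- `IsWalk G u l v` : `l` is a walk from `u` to `v` -/
def IsWalk (G : Digraph' V E) : V → List (E × Bool) → V → Prop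
  | u, [], w => u = w
  | u, st :: rest, w => stepSource G st = u ∧ IsWalk G (stepTarget G st) rest w

/-- a path: a walk with all vertices distinct -/
def IsPath (G : Digraph' V E) (u : V) (l : List (E × Bool)) (v : V) : Prop :=
  IsWalk G u l v ∧ (u :: l.map (stepTarget G)).Nodup

/-- a circuit at u: a nonempty closed walk with distinct vertices and distinct edges -/
def IsCircuit (G : Digraph' V E) (u : V) (l : List (E × Bool)) : Prop :=
  l ≠ [] ∧ IsWalk G u l u ∧ (l.map (stepTarget G)).Nodup ∧ (l.map Prod.fst).Nodup

/-- directed walk -/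
def IsDirWalk (G : Digraph' V E) : V → List E → V → Prop
  | u, [], w => u = w
  | u, e :: rest, w => G.s e = u ∧ IsDirWalk G (G.t e) rest w

def IsDirPath (G : Digraph' V E) (u : V) (l : List E) (v : V) : Prop :=
  IsDirWalk G u l v ∧ (u :: l.map G.t).Nodup

/-- directed circuit at u -/
def IsDirCircuit (G : Digraph' V E) (u : V) (l : List E) : Prop :=
  l ≠ [] ∧ IsDirWalk G u l u ∧ (l.map G.t).Nodup ∧ l.Nodup

/-- signed edge-sum λ(w) ∈ C₁ of a walk -/
noncomputable def lam (_G : Digraph' V E) (l : List (E × Bool)) : EuclideanSpace ℝ E :=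
  (l.map fun st => (if st.2 then (1:ℝ) else -1) • EuclideanSpace.single st.1 (1:ℝ)).sum

/-- edge-sum λ(p) of a directed walk -/
noncomputable def dirlam (_G : Digraph' V E) (l : List E) : EuclideanSpace ℝ E :=
  (l.map fun e => EuclideanSpace.single e (1:ℝ)).sum

/-- a graph-theoretical cycle: an integral 1-cycle with coefficients in {0, ±1} -/
def IsCycle (G : Digraph' V E) (γ : EuclideanSpace ℝ E) : Prop :=
  bd G γ = 0 ∧ ∀ j, γ j = 0 ∨ γ j = 1 ∨ γ j = -1

/-- an elementary cycle -/
def Elementary (G : Digraph' V E) (γ : EuclideanSpace ℝ E) : Prop :=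
  IsCycle G γ ∧ γ ≠ 0 ∧
    ¬ ∃ γ₁ γ₂, IsCycle G γ₁ ∧ IsCycle G γ₂ ∧ γ₁ ≠ 0 ∧ γ₂ ≠ 0 ∧
      (∀ j, γ₁ j = 0 ∨ γ₂ j = 0) ∧ γ = γ₁ + γ₂

noncomputable def plusSet (_G : Digraph' V E) (γ : EuclideanSpace ℝ E) : Finset E :=
  Finset.univ.filter fun j => γ j = 1

noncomputable def minusSet (_G : Digraph' V E) (γ : EuclideanSpace ℝ E) : Finset E :=
  Finset.univ.filter fun j => γ j = -1

end Digraph'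

/-- Reorient the edges of `G` according to `o : E → Bool` (`true` = keep direction). -/
def Digraph'.reorient {V E : Type} (G : Digraph' V E) (o : E → Bool) : Digraph' V E :=
  ⟨fun e => if o e then G.s e else G.t e, fun e => if o e then G.t e else G.s e⟩

/-!
A strongly connected orientation has no bridge: if `e` were one, the side of `G - e` containing
some vertex, or its complement, would be a proper nonempty set that no oriented edge leaves.

Conversely, fix a vertex `a₀` and an orientation whose strong component `K` of `a₀` is as large
as possible. Directed paths between points of `K` stay in `K`, so reorienting edges that are not
inside `K` cannot shrink it. If `K` is not everything, connectivity gives an edge `e` from `u ∈ K`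
to `v ∉ K`, and as `e` is not a bridge, `v` reaches `K` in `G - e`. Orient `e` from `u` to `v`
and every other edge leaving `K` from the end farther from `K` in `G - e` to the nearer one:
then `u → v` followed by a descent back to `K` puts `v` into the strong component, a contradiction.
-/

namespace Relation

variable {α : Type*} {r r' : α → α → Prop} {s : Set α} {a b : α}

def strongComponent (r : α → α → Prop) (a : α) : Set α :=
  {x | ReflTransGen r a x ∧ ReflTransGen r x a}

/-- Every point on a path between two points of a strong component lies in the component. -/
theorem strongComponent_subset_of_forall_rel
    (h : ∀ x ∈ strongComponent r a, ∀ y ∈ strongComponent r a, r x y → r' x y) :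
    strongComponent r a ⊆ strongComponent r' a := by
  rintro x ⟨hax, hxa⟩
  constructor
  · induction hax with
    | refl => exact .refl
    | @tail y z hay hyz ih =>
      have hya : ReflTransGen r y a := .head hyz hxa
      exact .tail (ih hya) (h y ⟨hay, hya⟩ z ⟨hay.tail hyz, hxa⟩ hyz)
  · induction hxa using ReflTransGen.head_induction_on with
    | refl => exact .refl
    | @head y z hyz hza ih =>
      have haz : ReflTransGen r a z := .tail hax hyz
      exact .head (h y ⟨hax, hza.head hyz⟩ z ⟨haz, hza⟩ hyz) (ih haz)

theorem ReflTransGen.exists_rel_mem_notMem (h : ReflTransGen r a b) (ha : a ∈ s) (hb : b ∉ s) :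
    ∃ x ∈ s, ∃ y ∉ s, r x y := by
  induction h with
  | refl => exact absurd ha hb
  | @tail y z _ hyz ih =>
    by_cases hy : y ∈ s
    · exact ⟨y, hy, z, hb, hyz⟩
    · exact ih hy

/-- `layer r s n` is the set of points from which an `r`-chain of length at most `n` leads
into `s`. -/
def layer (r : α → α → Prop) (s : Set α) : ℕ → Set α
  | 0 => s
  | n + 1 => layer r s n ∪ {x | ∃ y ∈ layer r s n, r x y}

theorem layer_mono : Monotone (layer r s) :=
  monotone_nat_of_le_succ fun _ => Set.subset_union_left

theorem ReflTransGen.exists_mem_layer (h : ReflTransGen r a b) (hb : b ∈ s) :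
    ∃ n, a ∈ layer r s n := by
  induction h using ReflTransGen.head_induction_on with
  | refl => exact ⟨0, hb⟩
  | head hac _ ih =>
    obtain ⟨n, hn⟩ := ih
    exact ⟨n + 1, Or.inr ⟨_, hn, hac⟩⟩

noncomputable def layerRank (r : α → α → Prop) (s : Set α) (a : α) : ℕ∞ :=
  ⨅ (n) (_ : a ∈ layer r s n), (n : ℕ∞)

theorem layerRank_lt_of_mem_of_notMem {n : ℕ} (hb : b ∈ layer r s n) (ha : a ∉ layer r s n) :
    layerRank r s b < layerRank r s a := by
  have hrank_b : layerRank r s b ≤ n := iInf₂_le n hb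
  have hrank_a : ((n + 1 : ℕ) : ℕ∞) ≤ layerRank r s a := by
    refine le_iInf₂ fun m hm => ?_
    by_contra! hmn
    exact ha (layer_mono (Nat.lt_succ_iff.mp (by exact_mod_cast hmn)) hm)
  exact hrank_b.trans_lt ((Nat.cast_lt.mpr n.lt_succ_self).trans_le hrank_a)

theorem exists_reflTransGen_mem_of_mem_layer
    (h : ∀ x y, x ∉ s → r x y → layerRank r s y < layerRank r s x → r' x y) :
    ∀ {n a}, a ∈ layer r s n → ∃ b ∈ s, ReflTransGen r' a b
  | 0, a, ha => ⟨a, ha, .refl⟩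
  | n + 1, a, ha => by
    by_cases ha' : a ∈ layer r s n
    · exact exists_reflTransGen_mem_of_mem_layer h ha'
    obtain ⟨b, hb, hab⟩ : ∃ b ∈ layer r s n, r a b := ha.resolve_left ha'
    have has : a ∉ s := fun has => ha' (layer_mono n.zero_le has)
    obtain ⟨c, hc, hbc⟩ := exists_reflTransGen_mem_of_mem_layer h hb
    exact ⟨c, hc, .head (h a b has hab (layerRank_lt_of_mem_of_notMem hb ha')) hbc⟩

end Relation

namespace Digraph'

open Relation

variable {V E : Type} {G : Digraph' V E} {o : E → Bool}

def Adj (H : Digraph' V E) (a b : V) : Prop := ∃ e, H.s e = a ∧ H.t e = b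

def Joins (G : Digraph' V E) (e : E) (a b : V) : Prop :=
  (G.s e = a ∧ G.t e = b) ∨ (G.s e = b ∧ G.t e = a)

def AdjVia (G : Digraph' V E) (S : Set E) (a b : V) : Prop := ∃ e ∈ S, G.Joins e a b

theorem Joins.symm {e : E} {a b : V} (h : G.Joins e a b) : G.Joins e b a := Or.symm h

theorem AdjVia.symm {S : Set E} {a b : V} (h : G.AdjVia S a b) : G.AdjVia S b a :=
  let ⟨e, he, hj⟩ := h; ⟨e, he, hj.symm⟩

theorem Joins.ends_mem_iff {K : Set V} {e : E} {a b : V} (h : G.Joins e a b) :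
    G.s e ∈ K ∧ G.t e ∈ K ↔ a ∈ K ∧ b ∈ K := by
  rcases h with ⟨rfl, rfl⟩ | ⟨rfl, rfl⟩ <;> tauto

theorem joins_reorient {e : E} :
    G.Joins e ((G.reorient o).s e) ((G.reorient o).t e) := by
  unfold reorient Joins
  cases h : o e <;> simp only [h] <;> simp

theorem adj_reorient_of_joins {P : V → V → Prop} {e : E} {a b : V} (he : G.Joins e a b)
    (ho : o e = true ↔ P (G.s e) (G.t e)) (hab : P a b) (hba : ¬P b a) :
    (G.reorient o).Adj a b := by
  refine ⟨e, ?_⟩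
  unfold reorient
  rcases he with ⟨rfl, rfl⟩ | ⟨rfl, rfl⟩
  · simp [ho.mpr hab]
  · simp [mt ho.mp hba]

theorem StronglyConnected.forall_of_closed {H : Digraph' V E} (h : StronglyConnected H)
    {P : V → Prop} (hP : ∀ e, P (H.s e) → P (H.t e)) {a : V} (ha : P a) (b : V) : P b := by
  induction h a b with
  | refl => exact ha
  | tail _ hbc ih =>
    obtain ⟨e, rfl, rfl⟩ := hbc
    exact hP e ih

theorem not_isBridge_of_stronglyConnected (h : StronglyConnected (G.reorient o)) (e : E) :
    ¬ IsBridge G e := by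
  intro hbr
  refine hbr fun a b => by_contra fun hab => ?_
  set H := G.reorient o
  set A : V → Prop := Reach G {e}ᶜ a
  have hA : ∀ f ≠ e, (A (H.s f) ↔ A (H.t f)) := fun f hf =>
    have hst : G.AdjVia {e}ᶜ (H.s f) (H.t f) := ⟨f, hf, joins_reorient⟩
    ⟨fun hs => hs.tail hst, fun ht => ht.tail hst.symm⟩
  by_cases he : A (H.s e) → A (H.t e)
  · refine hab (h.forall_of_closed (P := A) (fun f hf => ?_) .refl b)
    by_cases hfe : f = e
    · subst hfe; exact he hf
    · exact (hA f hfe).mp hf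
  · obtain ⟨hs, -⟩ := Classical.not_imp.mp he
    refine h.forall_of_closed (P := fun x => ¬A x) (fun f hf => ?_) hab a .refl
    by_cases hfe : f = e
    · subst hfe; exact absurd hs hf
    · exact (not_congr (hA f hfe)).mp hf

theorem exists_strongComponent_ssuperset (hconn : Connected G) (hbl : Bridgeless G) {a₀ : V}
    (hK : strongComponent (G.reorient o).Adj a₀ ≠ Set.univ) :
    ∃ o', strongComponent (G.reorient o).Adj a₀ ⊂ strongComponent (G.reorient o').Adj a₀ := by
  set K := strongComponent (G.reorient o).Adj a₀
  obtain ⟨w, hw⟩ := (Set.ne_univ_iff_exists_notMem K).mp hK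
  obtain ⟨u, hu, v, hv, e, -, huv⟩ :=
    (hconn a₀ w : ReflTransGen (G.AdjVia Set.univ) a₀ w).exists_rel_mem_notMem
      (show a₀ ∈ K from ⟨.refl, .refl⟩) hw
  replace huv : G.Joins e u v := huv
  have hvu : ReflTransGen (G.AdjVia {e}ᶜ) v u := not_not.mp (hbl e) v u
  set rank := layerRank (G.AdjVia {e}ᶜ) K
  set o' : E → Bool := fun f =>
    if G.s f ∈ K ∧ G.t f ∈ K then o f
    else if f = e then decide (G.s f ∈ K)
    else decide (rank (G.t f) < rank (G.s f))
  have hKK' : K ⊆ strongComponent (G.reorient o').Adj a₀ :=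
    strongComponent_subset_of_forall_rel fun x hx y hy hxy => by
      obtain ⟨f, hfx, hfy⟩ := hxy
      have hf : o' f = o f := if_pos ((hfx ▸ hfy ▸ joins_reorient).ends_mem_iff.mpr ⟨hx, hy⟩)
      refine ⟨f, ?_, ?_⟩ <;> simp only [reorient, hf] at hfx hfy ⊢ <;> assumption
  have huv' : (G.reorient o').Adj u v := by
    refine adj_reorient_of_joins (P := fun a _ => a ∈ K) huv ?_ hu hv
    dsimp only [o']
    rw [if_neg (fun h => hv (huv.ends_mem_iff.mp h).2), if_pos rfl, decide_eq_true_iff]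
  obtain ⟨c, hc, hvc⟩ : ∃ c ∈ K, ReflTransGen (G.reorient o').Adj v c := by
    obtain ⟨n, hn⟩ := hvu.exists_mem_layer hu
    refine exists_reflTransGen_mem_of_mem_layer (fun x y hx hxy hrank => ?_) hn
    obtain ⟨f, hfe, hf⟩ := hxy
    refine adj_reorient_of_joins (P := fun a b => rank b < rank a) hf ?_ hrank hrank.asymm
    dsimp only [o']
    rw [if_neg (fun h => hx (hf.ends_mem_iff.mp h).1), if_neg (Set.mem_compl_singleton_iff.mp hfe),
      decide_eq_true_iff]
  exact ⟨o', (Set.ssubset_iff_of_subset hKK').mpr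
    ⟨v, ⟨(hKK' hu).1.tail huv', hvc.trans (hKK' hc).2⟩, hv⟩⟩

theorem exists_stronglyConnected_reorient [Finite V] [Finite E] (hconn : Connected G)
    (hbl : Bridgeless G) : ∃ o, StronglyConnected (G.reorient o) := by
  rcases isEmpty_or_nonempty V with hV | ⟨⟨a₀⟩⟩
  · exact ⟨fun _ => true, fun a => isEmptyElim a⟩
  obtain ⟨o, ho⟩ := Finite.exists_max fun o : E → Bool =>
    (strongComponent (G.reorient o).Adj a₀).ncard
  have hK : strongComponent (G.reorient o).Adj a₀ = Set.univ := by
    by_contra hK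
    obtain ⟨o', ho'⟩ := exists_strongComponent_ssuperset hconn hbl hK
    exact (Set.ncard_lt_ncard ho').not_ge (ho o')
  refine ⟨o, fun a b => ?_⟩
  have hmem (x : V) : x ∈ strongComponent (G.reorient o).Adj a₀ := hK ▸ Set.mem_univ x
  exact (hmem a).2.trans (hmem b).1

end Digraph'

open Digraph' in
theorem stmt3_general {V E : Type} [Fintype V] [Fintype E]
    (G : Digraph' V E) (hconn : Connected G) :
    Bridgeless G ↔ ∃ o : E → Bool, StronglyConnected (G.reorient o) :=
  ⟨exists_stronglyConnected_reorient hconn,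
    fun ⟨_, h⟩ => not_isBridge_of_stronglyConnected h⟩

open Digraph' in
theorem stmt3 {V E : Type} [Fintype V] [Fintype E] [DecidableEq V] [DecidableEq E]
    (G : Digraph' V E) (hconn : Connected G) :
    Bridgeless G ↔ ∃ o : E → Bool, StronglyConnected (G.reorient o) :=
  stmt3_general G hconn
end

section
/- The lattices π(Λ) and H_Z = Λ ∩ H are mutually dual lattices in H = H_1(Γ,ℝ): for every λ ∈ Λ, (π(λ), γ) ∈ ℤ for all γ ∈ H_Z, and every linear functional on H taking integer values on H_Z is given by inner product with some element of π(Λ). -/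
open scoped RealInnerProductSpace
open Classical

/-! Pairing `π λ` with an integral cycle `γ` gives `⟪λ, γ⟫ ∈ ℤ`, because `π` is self-adjoint and
fixes `γ`. Conversely, connectedness provides an integral generalized inverse `κ` of `∂`, so
`ρ = id - κ ∂` is a retraction of `C₁` onto `H₁` preserving integrality; a functional `f` that is
integral on `H_ℤ` is then represented by the integral vector `λ` with `λ_e = f (ρ e)`. -/

section IntegerLattice

variable (E : Type*)

def integerLattice : AddSubgroup (EuclideanSpace ℝ E) where
  carrier := {x | ∀ j, ∃ n : ℤ, x j = n}
  add_mem' {x y} hx hy j := by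
    obtain ⟨m, hm⟩ := hx j
    obtain ⟨n, hn⟩ := hy j
    exact ⟨m + n, by simp [hm, hn]⟩
  zero_mem' _ := ⟨0, by simp⟩
  neg_mem' {x} hx j := by
    obtain ⟨n, hn⟩ := hx j
    exact ⟨-n, by simp [hn]⟩

variable {E}

theorem single_mem_integerLattice [DecidableEq E] (i : E) :
    EuclideanSpace.single i (1 : ℝ) ∈ integerLattice E := fun j =>
  ⟨if j = i then 1 else 0, by by_cases h : j = i <;> simp [h]⟩

theorem exists_inner_eq_intCast [Fintype E] {x y : EuclideanSpace ℝ E}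
    (hx : x ∈ integerLattice E) (hy : y ∈ integerLattice E) : ∃ n : ℤ, ⟪x, y⟫ = n := by
  choose m hm using hx
  choose n hn using hy
  exact ⟨∑ j, n j * m j, by simp [PiLp.inner_apply, hm, hn]⟩

theorem map_mem_of_single_mem [Fintype E] [DecidableEq E] {F : Type*} [AddCommGroup F]
    [Module ℝ F] {L : AddSubgroup F} (φ : EuclideanSpace ℝ E →ₗ[ℝ] F)
    (hφ : ∀ i, φ (EuclideanSpace.single i 1) ∈ L) {x : EuclideanSpace ℝ E}
    (hx : x ∈ integerLattice E) : φ x ∈ L := by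
  choose n hn using hx
  rw [← (EuclideanSpace.basisFun E ℝ).sum_repr x, map_sum]
  refine L.sum_mem fun i _ => ?_
  simp only [EuclideanSpace.basisFun_repr, EuclideanSpace.basisFun_apply, map_smul, hn]
  rw [Int.cast_smul_eq_zsmul]
  exact L.zsmul_mem (hφ i) _

theorem exists_mem_integerLattice_inner_eq [Fintype E] [DecidableEq E]
    {K : Submodule ℝ (EuclideanSpace ℝ E)} (ρ : EuclideanSpace ℝ E →ₗ[ℝ] K)
    (hρ : ∀ x : K, ρ x = x)
    (hρΛ : ∀ x ∈ integerLattice E, (ρ x : EuclideanSpace ℝ E) ∈ integerLattice E)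
    (f : K →ₗ[ℝ] ℝ) (hf : ∀ γ : K, (γ : EuclideanSpace ℝ E) ∈ integerLattice E → ∃ n : ℤ, f γ = n) :
    ∃ l ∈ integerLattice E, ∀ x : K, f x = ⟪l, (x : EuclideanSpace ℝ E)⟫ := by
  set l := (InnerProductSpace.toDual ℝ _).symm (f ∘ₗ ρ).toContinuousLinearMap
  have hl : ∀ x, ⟪l, x⟫ = f (ρ x) := fun _ => InnerProductSpace.toDual_symm_apply
  refine ⟨l, fun j => ?_, fun x => by rw [hl, hρ]⟩
  obtain ⟨n, hn⟩ := hf (ρ (EuclideanSpace.single j 1)) (hρΛ _ (single_mem_integerLattice j))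
  refine ⟨n, ?_⟩
  rw [← hn, ← hl, real_inner_comm, EuclideanSpace.inner_single_left, map_one, one_mul]

end IntegerLattice

namespace Digraph'

variable {V E : Type} [Fintype E] [DecidableEq V] [DecidableEq E]

theorem bd_single (G : Digraph' V E) (e : E) :
    bd G (EuclideanSpace.single e 1) =
      EuclideanSpace.single (G.s e) 1 - EuclideanSpace.single (G.t e) 1 := by
  ext v
  simp [bd, Matrix.toLpLin_apply, PiLp.single_apply, eq_comm]

theorem exists_bd_eq_of_reach (G : Digraph' V E) {S : Set E} {a b : V} (h : Reach G S a b) :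
    ∃ c ∈ integerLattice E,
      bd G c = EuclideanSpace.single b 1 - EuclideanSpace.single a 1 := by
  induction h with
  | refl => exact ⟨0, zero_mem _, by simp⟩
  | @tail b b' _ hstep ih =>
    obtain ⟨c, hc, hbd⟩ := ih
    obtain ⟨e, -, ⟨hs, ht⟩ | ⟨hs, ht⟩⟩ := hstep
    · refine ⟨c - EuclideanSpace.single e 1, sub_mem hc (single_mem_integerLattice e), ?_⟩
      rw [map_sub, hbd, bd_single, hs, ht]
      abel
    · refine ⟨c + EuclideanSpace.single e 1, add_mem hc (single_mem_integerLattice e), ?_⟩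
      rw [map_add, hbd, bd_single, hs, ht]
      abel

/-- Send each vertex `v` to an integral chain from a fixed root to `v`. -/
theorem exists_integral_generalizedInverse_bd [Fintype V] (G : Digraph' V E)
    (hconn : Connected G) :
    ∃ κ : EuclideanSpace ℝ V →ₗ[ℝ] EuclideanSpace ℝ E,
      (∀ y ∈ integerLattice V, κ y ∈ integerLattice E) ∧ bd G ∘ₗ κ ∘ₗ bd G = bd G := by
  rcases isEmpty_or_nonempty V with hV | ⟨⟨r⟩⟩
  · exact ⟨0, fun _ _ => zero_mem _, Subsingleton.elim _ _⟩
  choose c hc hbd using fun v => exists_bd_eq_of_reach G (hconn r v)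
  set κ := (EuclideanSpace.basisFun V ℝ).toBasis.constr ℝ c
  have hκ : ∀ v, κ (EuclideanSpace.single v 1) = c v := fun v => by
    rw [← EuclideanSpace.basisFun_apply, ← OrthonormalBasis.coe_toBasis, Module.Basis.constr_basis]
  refine ⟨κ, fun y hy => map_mem_of_single_mem κ (fun v => hκ v ▸ hc v) hy,
    (EuclideanSpace.basisFun E ℝ).toBasis.ext fun e => ?_⟩
  simp only [LinearMap.comp_apply, OrthonormalBasis.coe_toBasis, EuclideanSpace.basisFun_apply,
    bd_single, map_sub, hκ, hbd]
  abel

theorem bd_mem_integerLattice (G : Digraph' V E) {x : EuclideanSpace ℝ E}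
    (hx : x ∈ integerLattice E) : bd G x ∈ integerLattice V :=
  map_mem_of_single_mem (bd G) (fun e => bd_single G e ▸
    sub_mem (single_mem_integerLattice _) (single_mem_integerLattice _)) hx

theorem exists_integral_retraction_ker_bd [Fintype V] (G : Digraph' V E) (hconn : Connected G) :
    ∃ ρ : EuclideanSpace ℝ E →ₗ[ℝ] LinearMap.ker (bd G), (∀ x : LinearMap.ker (bd G), ρ x = x) ∧
      ∀ x ∈ integerLattice E, (ρ x : EuclideanSpace ℝ E) ∈ integerLattice E := by
  obtain ⟨κ, hκΛ, hκ⟩ := exists_integral_generalizedInverse_bd G hconn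
  let ρ : EuclideanSpace ℝ E →ₗ[ℝ] EuclideanSpace ℝ E := LinearMap.id - κ ∘ₗ bd G
  have hker : ∀ x, ρ x ∈ LinearMap.ker (bd G) := fun x => by
    simpa [ρ, sub_eq_zero] using (LinearMap.congr_fun hκ x).symm
  refine ⟨ρ.codRestrict _ hker, fun x => ?_, fun x hx => ?_⟩
  · ext1
    simp [ρ, LinearMap.mem_ker.mp x.2]
  · exact sub_mem hx (hκΛ _ (bd_mem_integerLattice G hx))

theorem inner_proj_of_mem_ker (G : Digraph' V E) (l : EuclideanSpace ℝ E)
    {γ : EuclideanSpace ℝ E} (hγ : γ ∈ LinearMap.ker (bd G)) :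
    ⟪proj G l, γ⟫ = ⟪l, γ⟫ :=
  Submodule.inner_orthogonalProjectionOnto_eq_of_mem_right ⟨γ, hγ⟩ l

end Digraph'

open Digraph' in
theorem stmt5 {V E : Type} [Fintype V] [Fintype E] [DecidableEq V] [DecidableEq E]
    (G : Digraph' V E) (hconn : Connected G) :
    (∀ l : EuclideanSpace ℝ E, (∀ j, ∃ n : ℤ, l j = n) →
        ∀ γ ∈ LinearMap.ker (bd G), (∀ j, ∃ n : ℤ, γ j = n) →
          ∃ n : ℤ, (inner ℝ (proj G l) γ : ℝ) = n) ∧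
    (∀ f : LinearMap.ker (bd G) →ₗ[ℝ] ℝ,
        (∀ γ : LinearMap.ker (bd G), (∀ j, (γ : EuclideanSpace ℝ E) j ∈ Set.range ((↑) : ℤ → ℝ)) →
          ∃ n : ℤ, f γ = n) →
        ∃ l : EuclideanSpace ℝ E, (∀ j, ∃ n : ℤ, l j = n) ∧
          ∀ x : LinearMap.ker (bd G), f x = (inner ℝ (proj G l) (x : EuclideanSpace ℝ E) : ℝ)) := by
  refine ⟨fun l hl γ hγ hγΛ => inner_proj_of_mem_ker G l hγ ▸ exists_inner_eq_intCast hl hγΛ,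
    fun f hf => ?_⟩
  obtain ⟨ρ, hρ, hρΛ⟩ := exists_integral_retraction_ker_bd G hconn
  obtain ⟨l, hlΛ, hl⟩ := exists_mem_integerLattice_inner_eq ρ hρ hρΛ f
    fun γ hγ => hf γ fun j => (hγ j).imp fun _ => Eq.symm
  exact ⟨l, hlΛ, fun x => by rw [hl, inner_proj_of_mem_ker G l x.2]⟩
end
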